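/- arXiv:1407.1521 — 6 statements merged into one kernel-verified Lean document; each statement's English description precedes it below -/
import Mathlib

section
/- Let T be a finite rooted tree, γ ≥ 2 an integer, and h ≥ 0. Let T' = T^{γ,h} be the subtree of T induced by all nodes of γ-height at least h (this is a subtree containing the root, since γ-heights are non-decreasing along leaf-to-root paths). Then for every node v in T', the γ-height of v computed within T' equals heightγ(v) − h. In particular the γ-depth of T' equals the γ-depth of T minus h. -/
/-- If `H` is the γ-height in the tree `T` and `H'` is the γ-height
computed within the induced subtree `T^{γ,h}` on nodes with `H ≥ h` (whose
children map is `children v` filtered to nodes of γ-height at least `h`), then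
for every node `v` of `T^{γ,h}` we have `H' v = H v - h`, stated as
`H' v + h = H v`. -/
theorem stmt2 {V : Type*} [DecidableEq V] [Fintype V]
    (children : V → Finset V) (H H' : V → ℕ) (γ h : ℕ)
    (hγ : 2 ≤ γ)
    (hwf : WellFounded (fun a b : V => a ∈ children b))
    (hleaf : ∀ v, children v = ∅ → H v = 0)
    (hint : ∀ v, children v ≠ ∅ →
      H v = if γ ≤ ((children v).filter (fun u => H u = (children v).sup H)).card
            then (children v).sup H + 1 else (children v).sup H)
    (hleaf' : ∀ v, h ≤ H v → (children v).filter (fun u => h ≤ H u) = ∅ → H' v = 0)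
    (hint' : ∀ v, h ≤ H v → (children v).filter (fun u => h ≤ H u) ≠ ∅ →
      H' v = if γ ≤ (((children v).filter (fun u => h ≤ H u)).filter
                (fun u => H' u = ((children v).filter (fun u => h ≤ H u)).sup H')).card
             then ((children v).filter (fun u => h ≤ H u)).sup H' + 1
             else ((children v).filter (fun u => h ≤ H u)).sup H') :
    ∀ v : V, h ≤ H v → H' v + h = H v := by
  intro v
  induction v using hwf.induction with
  | _ v ih =>
    intro hv
    by_cases hF : (children v).filter (fun u => h ≤ H u) = ∅
    · rw [hleaf' v hv hF]
      by_cases hC : children v = ∅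
      · have h0 := hleaf v hC; omega
      · have hne : (children v).Nonempty := Finset.nonempty_iff_ne_empty.mpr hC
        have hh1 : 0 < h := by
          by_contra hh
          have hz : h = 0 := by omega
          apply hC
          rw [← hF, hz]
          ext u; simp
        have hlt : ∀ u ∈ children v, H u < h := by
          intro u hu
          by_contra hcon
          have hmem : u ∈ (children v).filter (fun u => h ≤ H u) := by
            simp only [Finset.mem_filter]
            exact ⟨hu, by omega⟩
          rw [hF] at hmem
          exact absurd hmem (Finset.notMem_empty u)
        have hsup : (children v).sup H < h :=
          (Finset.sup_lt_iff hh1).mpr hlt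
        have hHv := hint v hC
        have : H v ≤ (children v).sup H + 1 := by
          rw [hHv]; split <;> omega
        omega
    · have hFne : ((children v).filter (fun u => h ≤ H u)).Nonempty :=
        Finset.nonempty_iff_ne_empty.mpr hF
      have hC : children v ≠ ∅ := by
        intro hc; apply hF; rw [hc]; rfl
      have hne : (children v).Nonempty := Finset.nonempty_iff_ne_empty.mpr hC
      have hIH : ∀ u ∈ (children v).filter (fun u => h ≤ H u), H' u + h = H u := by
        intro u hu
        rw [Finset.mem_filter] at hu
        exact ih u hu.1 hu.2
      obtain ⟨u₁, hu₁F⟩ := hFne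
      have hu₁ : u₁ ∈ children v ∧ h ≤ H u₁ := Finset.mem_filter.mp hu₁F
      have hhg : h ≤ (children v).sup H := le_trans hu₁.2 (Finset.le_sup hu₁.1)
      obtain ⟨w, hwC, hw⟩ := Finset.exists_mem_eq_sup (children v) hne H
      have hwF : w ∈ (children v).filter (fun u => h ≤ H u) :=
        Finset.mem_filter.mpr ⟨hwC, by omega⟩
      obtain ⟨u₀, hu₀F, hu₀⟩ := Finset.exists_mem_eq_sup
        ((children v).filter (fun u => h ≤ H u))
        (Finset.nonempty_iff_ne_empty.mpr hF) H'
      have hgg' : ((children v).filter (fun u => h ≤ H u)).sup H' + h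
          = (children v).sup H := by
        have h1 := hIH u₀ hu₀F
        have h2 : H u₀ ≤ (children v).sup H :=
          Finset.le_sup (Finset.filter_subset _ _ hu₀F)
        have h3 := hIH w hwF
        have h4 : H' w ≤ ((children v).filter (fun u => h ≤ H u)).sup H' :=
          Finset.le_sup hwF
        omega
      have hsets : ((children v).filter (fun u => h ≤ H u)).filter
            (fun u => H' u = ((children v).filter (fun u => h ≤ H u)).sup H')
          = (children v).filter (fun u => H u = (children v).sup H) := by
        ext u
        simp only [Finset.mem_filter, and_assoc]
        constructor
        · rintro ⟨huC, huh, hu'⟩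
          refine ⟨huC, ?_⟩
          have := hIH u (Finset.mem_filter.mpr ⟨huC, huh⟩)
          omega
        · rintro ⟨huC, huH⟩
          have huh : h ≤ H u := by omega
          have := hIH u (Finset.mem_filter.mpr ⟨huC, huh⟩)
          exact ⟨huC, huh, by omega⟩
      have hHv := hint v hC
      have hH'v := hint' v hv hF
      rw [hsets] at hH'v
      rw [hHv, hH'v]
      split <;> omega
end

section
/- Let p be a prime and for each a ∈ {1,...,p−1} and x ∈ {0,...,p−1} define d_a(x) = (a·x mod p) + 2p·(a·x² mod p). Then for any a ≠ b in {1,...,p−1} and any integer t, the equation d_a(x) − d_b(y) = t has at most two solutions (x,y) ∈ {0,...,p−1}². -/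
/-!
Since `0 ≤ a x mod p < p`, the integer `d_a(x) - d_b(y)` is written in "base `2p`" with a
low digit in `(-p, p)`, so it determines both `(a x mod p) - (b y mod p)` and
`(a x² mod p) - (b y² mod p)`. Hence all solutions of `d_a(x) - d_b(y) = t` satisfy
`a x - b y = c` and `a x² - b y² = d` in `𝔽_p` for fixed `c, d`. Eliminating `y` leaves a
quadratic equation in `x` with leading coefficient `a (b - a) ≠ 0`, and `x` determines `y`.
-/

/-- The function `d_a(x) = (a·x mod p) + 2p·(a·x² mod p)`. -/
def dval (p a x : ℕ) : ℕ := a * x % p + 2 * p * (a * x ^ 2 % p)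

open Polynomial Finset

theorem Int.eq_and_eq_of_add_mul_eq_add_mul {m u₁ u₂ v₁ v₂ : ℤ}
    (h : u₁ + m * v₁ = u₂ + m * v₂) (hu : |u₁ - u₂| < m) : u₁ = u₂ ∧ v₁ = v₂ := by
  have hu₀ : u₁ - u₂ = 0 :=
    Int.eq_zero_of_abs_lt_dvd ⟨v₂ - v₁, by linear_combination h⟩ hu
  have hm : m ≠ 0 := by have := abs_nonneg (u₁ - u₂); omega
  exact ⟨by omega, mul_left_cancel₀ hm (by linear_combination h - hu₀)⟩

theorem card_le_two_of_sub_eq_of_sq_sub_eq {K : Type*} [Field K] {a b c d : K}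
    (ha : a ≠ 0) (hb : b ≠ 0) (hab : a ≠ b) {S : Finset (K × K)}
    (hS : ∀ s ∈ S, a * s.1 - b * s.2 = c ∧ a * s.1 ^ 2 - b * s.2 ^ 2 = d) : #S ≤ 2 := by
  classical
  set q : K[X] := C (a * (b - a)) * X ^ 2 + C (2 * a * c) * X + C (-(c ^ 2 + b * d))
  have hq : q.natDegree = 2 := natDegree_quadratic (mul_ne_zero ha (sub_ne_zero.2 hab.symm))
  have hq₀ : q ≠ 0 := ne_zero_of_natDegree_gt (n := 0) (by omega)
  -- eliminate `y` using `b y = a x - c`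
  have hroot : ∀ s ∈ S, q.IsRoot s.1 := fun s hs ↦ by
    obtain ⟨h₁, h₂⟩ := hS s hs
    simp only [q, IsRoot, eval_add, eval_mul, eval_C, eval_pow, eval_X]
    linear_combination b * h₂ - (b * s.2 + a * s.1 - c) * h₁
  have hinj : Set.InjOn Prod.fst (S : Set (K × K)) := fun s hs s' hs' hx ↦ by
    have hy : b * s.2 = b * s'.2 := by
      linear_combination (hS s' hs').1 - (hS s hs).1 + a * hx
    exact Prod.ext hx (mul_left_cancel₀ hb hy)
  calc #S = #(S.image Prod.fst) := (card_image_of_injOn hinj).symm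
    _ ≤ q.natDegree := card_le_degree_of_subset_roots fun x hx ↦ by
        obtain ⟨s, hs, rfl⟩ := mem_image.1 hx
        exact (mem_roots hq₀).2 (hroot s hs)
    _ = 2 := hq

theorem dval_sub_dval (p a b x y : ℕ) :
    (dval p a x : ℤ) - dval p b y
      = (((a * x % p : ℕ) : ℤ) - (b * y % p : ℕ))
        + 2 * p * (((a * x ^ 2 % p : ℕ) : ℤ) - (b * y ^ 2 % p : ℕ)) := by
  simp only [dval]
  push_cast
  ring

theorem zmod_eq_of_dval_sub_dval_eq {p : ℕ} (hp : 0 < p) {a b x y x' y' : ℕ}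
    (h : (dval p a x : ℤ) - dval p b y = (dval p a x' : ℤ) - dval p b y') :
    (a * x - b * y : ZMod p) = a * x' - b * y' ∧
      (a * x ^ 2 - b * y ^ 2 : ZMod p) = a * x' ^ 2 - b * y' ^ 2 := by
  rw [dval_sub_dval, dval_sub_dval] at h
  have := Nat.mod_lt (a * x) hp
  have := Nat.mod_lt (b * y) hp
  have := Nat.mod_lt (a * x') hp
  have := Nat.mod_lt (b * y') hp
  obtain ⟨h₁, h₂⟩ := Int.eq_and_eq_of_add_mul_eq_add_mul h (abs_lt.2 ⟨by omega, by omega⟩)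
  have h₁ := congrArg (Int.cast : ℤ → ZMod p) h₁
  have h₂ := congrArg (Int.cast : ℤ → ZMod p) h₂
  push_cast [ZMod.natCast_mod] at h₁ h₂
  exact ⟨h₁, h₂⟩

/-- For a prime `p`, distinct `a ≠ b` in `{1,...,p-1}` and any
integer `t`, the equation `d_a(x) - d_b(y) = t` has at most two solutions
`(x,y) ∈ {0,...,p-1}²`. -/
theorem stmt6 (p : ℕ) (hp : p.Prime) (a b : ℕ)
    (ha : 1 ≤ a ∧ a ≤ p - 1) (hb : 1 ≤ b ∧ b ≤ p - 1) (hab : a ≠ b) (t : ℤ) :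
    (((Finset.range p) ×ˢ (Finset.range p)).filter
      (fun xy => (dval p a xy.1 : ℤ) - (dval p b xy.2 : ℤ) = t)).card ≤ 2 := by
  have := Fact.mk hp
  set S := ((range p) ×ˢ (range p)).filter fun xy => (dval p a xy.1 : ℤ) - dval p b xy.2 = t
  obtain hS | ⟨s₀, hs₀⟩ := S.eq_empty_or_nonempty
  · simp [hS]
  have hmem : ∀ s ∈ S, (s.1 < p ∧ s.2 < p) ∧ (dval p a s.1 : ℤ) - dval p b s.2 = t := by
    simp [S]
  have hcast : Set.InjOn ((↑) : ℕ → ZMod p) (Set.Iio p) := CharP.natCast_injOn_Iio _ p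
  have hne : ∀ {m n : ℕ}, m < p → n < p → m ≠ n → (m : ZMod p) ≠ n :=
    fun hm hn hmn h ↦ hmn (hcast hm hn h)
  have hinj : Set.InjOn (Prod.map ((↑) : ℕ → ZMod p) ((↑) : ℕ → ZMod p)) (S : Set (ℕ × ℕ)) :=
    fun s hs s' hs' h ↦
      Prod.ext (hcast (hmem s hs).1.1 (hmem s' hs').1.1 (congrArg Prod.fst h))
        (hcast (hmem s hs).1.2 (hmem s' hs').1.2 (congrArg Prod.snd h))
  rw [← card_image_of_injOn hinj]
  refine card_le_two_of_sub_eq_of_sq_sub_eq (a := (a : ZMod p)) (b := (b : ZMod p))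
    (c := a * s₀.1 - b * s₀.2) (d := a * s₀.1 ^ 2 - b * s₀.2 ^ 2) ?_ ?_ ?_ ?_
  · simpa using hne (m := a) (n := 0) (by omega) hp.pos (by omega)
  · simpa using hne (m := b) (n := 0) (by omega) hp.pos (by omega)
  · exact hne (by omega) (by omega) hab
  · intro _ hs'
    obtain ⟨s, hs, rfl⟩ := mem_image.1 hs'
    exact zmod_eq_of_dval_sub_dval_eq hp.pos ((hmem s hs).2.trans (hmem s₀ hs₀).2.symm)
end

section
/- Let p be a prime and a, b ∈ {1,...,p−1} with a ≠ b. If x, y, u, v ∈ Z_p satisfy a·x − a·u ≡ b·y − b·v (mod p) and a·x² − a·u² ≡ b·y² − b·v² (mod p), and (x,y) ≠ (u,v), then x ≠ u, y ≠ v, and x + u ≡ y + v (mod p); moreover (u,v) is uniquely determined by (x,y,a,b). -/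
/-- In `ZMod p` (`p` prime), with nonzero `a ≠ b`, if
`a·x − a·u ≡ b·y − b·v` and `a·x² − a·u² ≡ b·y² − b·v²` and `(x,y) ≠ (u,v)`,
then `x ≠ u`, `y ≠ v`, `x + u = y + v`, and `(u,v)` is uniquely determined by
`(x,y,a,b)`. -/
theorem stmt7 (p : ℕ) [Fact p.Prime] (a b : ZMod p) (ha : a ≠ 0) (hb : b ≠ 0)
    (hab : a ≠ b) (x y u v : ZMod p)
    (h1 : a * x - a * u = b * y - b * v)
    (h2 : a * x ^ 2 - a * u ^ 2 = b * y ^ 2 - b * v ^ 2)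
    (hne : (x, y) ≠ (u, v)) :
    x ≠ u ∧ y ≠ v ∧ x + u = y + v ∧
    ∀ u' v' : ZMod p,
      a * x - a * u' = b * y - b * v' →
      a * x ^ 2 - a * u' ^ 2 = b * y ^ 2 - b * v' ^ 2 →
      (x, y) ≠ (u', v') → u' = u ∧ v' = v := by
  have key : ∀ u' v' : ZMod p,
      a * x - a * u' = b * y - b * v' →
      a * x ^ 2 - a * u' ^ 2 = b * y ^ 2 - b * v' ^ 2 →
      (x, y) ≠ (u', v') → x ≠ u' ∧ y ≠ v' ∧ x + u' = y + v' := by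
    intro u' v' e1 e2 hne'
    have hxu : x ≠ u' := by
      intro h
      subst h
      have hb0 : b * (y - v') = 0 := by linear_combination -e1
      rcases mul_eq_zero.1 hb0 with h | h
      · exact hb h
      · exact hne' (by rw [sub_eq_zero.1 h])
    have hyv : y ≠ v' := by
      intro h
      subst h
      have ha0 : a * (x - u') = 0 := by linear_combination e1
      rcases mul_eq_zero.1 ha0 with h | h
      · exact ha h
      · exact hne' (by rw [sub_eq_zero.1 h])
    refine ⟨hxu, hyv, ?_⟩
    have hc : b * (y - v') ≠ 0 := mul_ne_zero hb (sub_ne_zero.2 hyv)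
    have : b * (y - v') * (x + u') = b * (y - v') * (y + v') := by
      linear_combination e2 - (x + u') * e1
    exact mul_left_cancel₀ hc this
  obtain ⟨hxu, hyv, hsum⟩ := key u v h1 h2 hne
  refine ⟨hxu, hyv, hsum, ?_⟩
  intro u' v' e1 e2 hne'
  obtain ⟨_, _, hsum'⟩ := key u' v' e1 e2 hne'
  have hd : u - u' = v - v' := by linear_combination hsum - hsum'
  have h0 : (a - b) * (u - u') = 0 := by
    linear_combination e1 - h1 - b * hd
  have huu : u = u' := by
    rcases mul_eq_zero.1 h0 with h | h
    · exact absurd (sub_eq_zero.1 h) hab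
    · exact (sub_eq_zero.1 h)
  have hvv : v = v' := by
    have := hd
    rw [huu] at this
    simpa [sub_eq_zero] using (by linear_combination -this : v - v' = 0)
  exact ⟨huu.symm, hvv.symm⟩
end

section
/- For every n there exists an (n, m, s)-disperser with m = Ω(√n) sets and s = O(n). Concretely, if p is a prime with p² ≥ n, m = (p−1)/2, s = 2p²+p, and for 1 ≤ i ≤ m we set D_i = { (i·x mod p) + 2p·(i·x² mod p) : x ∈ {0,...,p−1} }, then D_1,...,D_m ⊆ {0,...,s−1} is an (n,m,s)-disperser. -/
open Polynomial Finset

/-- Key lemma: for fixed `i ≠ j`, at most 2 values of `x` can collide. -/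
lemma badcard (p : ℕ) (hp : p.Prime) (δ : ℕ → ℕ) (i j : ℕ)
    (hi1 : 1 ≤ i) (hi2 : i < p) (hj1 : 1 ≤ j) (hj2 : j < p)
    (hij : i ≠ j) :
    ((Finset.range p).filter
      (fun x => ∃ y < p, dval p j x + δ j = dval p i y + δ i)).card ≤ 2 := by
  haveI : Fact p.Prime := ⟨hp⟩
  have hp2 : 2 ≤ p := hp.two_le
  have hppos : 0 < p := by omega
  have hp0 : (0:ℤ) < 2 * p := by positivity
  set Δ : ℤ := (δ i : ℤ) - δ j with hΔ
  set r : ℤ := Δ % (2 * p) with hr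
  have hr0 : 0 ≤ r := Int.emod_nonneg _ (by positivity)
  have hr1 : r < 2 * p := Int.emod_lt_of_pos _ hp0
  set a : ℤ := if r < p then r else r - 2 * p with ha
  have ha1 : -(p:ℤ) ≤ a ∧ a < p := by
    rw [ha]; split_ifs with h <;> constructor <;> omega
  have hdvd : (2 * (p:ℤ)) ∣ Δ - a := by
    have h0 := Int.mul_ediv_add_emod Δ (2 * p)
    rw [← hr] at h0
    rw [ha]; split_ifs with h
    · exact ⟨Δ / (2 * p), by linear_combination -h0⟩
    · exact ⟨Δ / (2 * p) + 1, by linear_combination -h0⟩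
  set b : ℤ := (Δ - a) / (2 * p) with hbdef
  have hb : Δ - a = 2 * p * b := by
    rw [hbdef]; exact (Int.mul_ediv_cancel' hdvd).symm
  -- ZMod quantities
  set I : ZMod p := (i : ZMod p) with hI
  set J : ZMod p := (j : ZMod p) with hJ
  set A : ZMod p := ((a : ℤ) : ZMod p) with hAd
  set B : ZMod p := ((b : ℤ) : ZMod p) with hBd
  have hvI : I.val = i := ZMod.val_cast_of_lt hi2
  have hvJ : J.val = j := ZMod.val_cast_of_lt hj2
  have hJ0 : J ≠ 0 := by
    intro h
    have : J.val = 0 := by rw [h, ZMod.val_zero]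
    omega
  have hIJ : I - J ≠ 0 := by
    intro h
    have : I = J := by linear_combination h
    have : I.val = J.val := by rw [this]
    omega
  have hlead : J * (I - J) ≠ 0 := mul_ne_zero hJ0 hIJ
  set P : Polynomial (ZMod p) :=
    C (J * (I - J)) * X ^ 2 + C (2 * A * J) * X + C (-(A ^ 2) - I * B) with hP
  have hPdeg : P.natDegree = 2 := Polynomial.natDegree_quadratic hlead
  have hPne : P ≠ 0 := by
    intro h
    rw [h, Polynomial.natDegree_zero] at hPdeg
    omega
  -- each bad x maps to a root of P
  have hmem : ∀ x ∈ (Finset.range p).filter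
      (fun x => ∃ y < p, dval p j x + δ j = dval p i y + δ i),
      ((x : ZMod p)) ∈ P.roots.toFinset := by
    intro x hx
    rw [Finset.mem_filter, Finset.mem_range] at hx
    obtain ⟨hxp, y, hyp, heq⟩ := hx
    set Lj : ℕ := j * x % p with hLj
    set Hj : ℕ := j * x ^ 2 % p with hHj
    set Li : ℕ := i * y % p with hLi
    set Hi : ℕ := i * y ^ 2 % p with hHi
    have hLjp : Lj < p := Nat.mod_lt _ hppos
    have hLip : Li < p := Nat.mod_lt _ hppos
    have hint : (Lj:ℤ) + 2 * p * Hj + δ j = (Li:ℤ) + 2 * p * Hi + δ i := by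
      exact_mod_cast heq
    set D : ℤ := (Lj:ℤ) - Li with hDdef
    have hDbd : -(p:ℤ) < D ∧ D < p := by
      constructor <;> (rw [hDdef]; push_cast; omega)
    have hdvd2 : (2 * (p:ℤ)) ∣ D - a := by
      have h1 : Δ - D = 2 * p * ((Hj:ℤ) - Hi) := by
        rw [hΔ, hDdef]; linarith
      exact ⟨b - ((Hj:ℤ) - Hi), by linarith [hb]⟩
    have hDa : D = a := by
      have h0 : D - a = 0 := by
        refine Int.eq_zero_of_abs_lt_dvd hdvd2 ?_
        rw [abs_lt]
        obtain ⟨hb1, hb2⟩ := hDbd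
        obtain ⟨ha2, ha3⟩ := ha1
        constructor <;> linarith
      linarith
    have hHb : (Hj:ℤ) - Hi = b := by
      have h1 : 2 * (p:ℤ) * ((Hj:ℤ) - Hi) = 2 * p * b := by
        rw [← hb, hΔ]
        have : (Lj:ℤ) - Li = a := hDa
        linarith
      exact mul_left_cancel₀ (by positivity) h1
    -- cast to ZMod p
    have e1 : J * (x : ZMod p) - I * (y : ZMod p) = A := by
      have := congrArg (fun z : ℤ => (z : ZMod p)) hDa
      simp only [hDdef, hLj, hLi] at this
      push_cast [ZMod.natCast_mod] at this
      rw [hAd, hI, hJ]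
      exact_mod_cast this
    have e2 : J * (x : ZMod p) ^ 2 - I * (y : ZMod p) ^ 2 = B := by
      have := congrArg (fun z : ℤ => (z : ZMod p)) hHb
      simp only [hHj, hHi] at this
      push_cast [ZMod.natCast_mod] at this
      rw [hBd, hI, hJ]
      exact_mod_cast this
    rw [Multiset.mem_toFinset, Polynomial.mem_roots hPne]
    show P.eval (x : ZMod p) = 0
    rw [hP]
    simp only [eval_add, eval_mul, eval_pow, eval_C, eval_X]
    linear_combination I * e2 - (I * (y : ZMod p) + J * (x : ZMod p) - A) * e1
  refine le_trans (Finset.card_le_card_of_injOn (fun x : ℕ => (x : ZMod p)) hmem ?_) ?_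
  · intro x hx y hy hxy
    rw [Finset.coe_filter, Set.mem_setOf_eq, Finset.mem_range] at hx hy
    have := congrArg ZMod.val hxy
    rwa [ZMod.val_cast_of_lt hx.1, ZMod.val_cast_of_lt hy.1] at this
  · exact le_trans (Multiset.toFinset_card_le _)
      (le_trans (Polynomial.card_roots' P) (le_of_eq hPdeg))

/-- For an odd prime `p` with `n ≤ p²`, `m = (p-1)/2`,
`s = 2p² + p`, the sets `D_i = {d_i(x) : x ∈ [p]}` for `1 ≤ i ≤ m` form an
`(n,m,s)`-disperser: they lie in `{0,...,s-1}`, and for every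
`δ : {1,...,m} → [n]` and every `j`, some element of `D_j + δ(j)` avoids
`⋃_{i ≠ j} (D_i + δ(i))`. -/
theorem stmt8 (p n : ℕ) (hp : p.Prime) (hodd : Odd p) (hn1 : 1 ≤ n)
    (hn : n ≤ p ^ 2)
    (δ : ℕ → ℕ) (hδ : ∀ i ∈ Finset.Icc 1 ((p - 1) / 2), δ i < n)
    (j : ℕ) (hj : j ∈ Finset.Icc 1 ((p - 1) / 2)) :
    (∀ i ∈ Finset.Icc 1 ((p - 1) / 2), ∀ x < p, dval p i x < 2 * p ^ 2 + p) ∧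
    ∃ x < p, ∀ i ∈ Finset.Icc 1 ((p - 1) / 2), i ≠ j → ∀ y < p,
      dval p j x + δ j ≠ dval p i y + δ i := by
  have hp2 : 2 ≤ p := hp.two_le
  have hp3 : 3 ≤ p := by
    obtain ⟨k, hk⟩ := hodd; omega
  rw [Finset.mem_Icc] at hj
  constructor
  · intro i hi x hx
    have h1 : i * x % p < p := Nat.mod_lt _ (by omega)
    have h2 : i * x ^ 2 % p < p := Nat.mod_lt _ (by omega)
    unfold dval
    nlinarith
  · set m := (p - 1) / 2 with hm
    set S : Finset ℕ := (Finset.Icc 1 m \ {j}).biUnion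
      (fun i => (Finset.range p).filter
        (fun x => ∃ y < p, dval p j x + δ j = dval p i y + δ i)) with hS
    have hSsub : S ⊆ Finset.range p := by
      intro x hx
      rw [hS, Finset.mem_biUnion] at hx
      obtain ⟨i, _, hx⟩ := hx
      exact (Finset.mem_filter.1 hx).1
    have hcard : S.card ≤ 2 * (m - 1) := by
      refine le_trans (Finset.card_biUnion_le) ?_
      have hbound : ∀ i ∈ Finset.Icc 1 m \ {j},
          ((Finset.range p).filter
            (fun x => ∃ y < p, dval p j x + δ j = dval p i y + δ i)).card ≤ 2 := by
        intro i hi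
        rw [Finset.mem_sdiff, Finset.mem_Icc, Finset.mem_singleton] at hi
        have hmlt : m < p := by omega
        exact badcard p hp δ i j (by omega) (by omega) (by omega) (by omega) hi.2
      refine le_trans (Finset.sum_le_sum hbound) ?_
      rw [Finset.sum_const, smul_eq_mul]
      have : (Finset.Icc 1 m \ {j}).card = m - 1 := by
        rw [Finset.sdiff_singleton_eq_erase, Finset.card_erase_of_mem
          (Finset.mem_Icc.2 hj), Nat.card_Icc]
        omega
      omega
    have hne : (Finset.range p \ S).Nonempty := by
      rw [← Finset.card_pos, Finset.card_sdiff_of_subset hSsub, Finset.card_range]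
      omega
    obtain ⟨x, hx⟩ := hne
    rw [Finset.mem_sdiff, Finset.mem_range] at hx
    obtain ⟨hxr, hxS⟩ := hx
    refine ⟨x, hxr, ?_⟩
    intro i hi hij y hy heq
    apply hxS
    rw [hS, Finset.mem_biUnion]
    refine ⟨i, ?_, Finset.mem_filter.2 ⟨Finset.mem_range.2 hxr, y, hy, heq⟩⟩
    rw [Finset.mem_sdiff, Finset.mem_singleton]
    exact ⟨hi, hij⟩
end

section
/- The function f(x) = x·ln(1 − e^{−x}) on (0,∞) attains its infimum at x = ln 2, and inf_{x>0} x·ln(1−e^{−x}) = −ln²2. -/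
/-!
Substituting `u = e^{-x} ∈ (0, 1)` turns `f(x)` into `-log u · log (1 - u)`, which is symmetric
under `u ↦ 1 - u`. On `(0, 1/2]` the product `log u · log (1 - u)` is increasing, because its
derivative has the sign of `(1 - u) log (1 - u) - u log u`, and this is positive for `u < 1/2`:
below `e⁻¹` because `u log u ≤ -u`, above it because `t ↦ t log t` is increasing on `[e⁻¹, ∞)`.
Hence the product is maximal at `u = 1/2`, i.e. `x = log 2`, where it equals `(log 2)²`.
-/

open Real Set

theorem Real.mul_log_lt_one_sub_mul_log_one_sub {u : ℝ} (h0 : 0 < u) (h1 : u < 1 / 2) :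
    u * log u < (1 - u) * log (1 - u) := by
  rcases le_or_gt u (exp (-1)) with hu | hu
  · have hlog : log u ≤ -1 := by simpa using log_le_log h0 hu
    calc u * log u ≤ -u := by nlinarith
      _ = (1 - u) - 1 := by ring
      _ < (1 - u) * log (1 - u) := self_sub_one_lt_mul_log (by linarith) (by linarith)
  · have h1u : exp (-1) ≤ 1 - u := by linarith [exp_neg_one_lt_half]
    exact mul_log_strictMonoOn (mem_Ici.2 hu.le) (mem_Ici.2 h1u) (by linarith)

theorem Real.hasDerivAt_log_mul_log_one_sub {u : ℝ} (h0 : u ≠ 0) (h1 : u ≠ 1) :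
    HasDerivAt (fun u ↦ log u * log (1 - u)) (log (1 - u) / u - log u / (1 - u)) u := by
  have h1u : 1 - u ≠ 0 := sub_ne_zero.2 h1.symm
  exact ((hasDerivAt_log h0).mul (((hasDerivAt_id' u).const_sub 1).log h1u)).congr_deriv
    (by ring)

theorem Real.log_mul_log_one_sub_le_of_le_half {u : ℝ} (h0 : 0 < u) (h1 : u ≤ 1 / 2) :
    log u * log (1 - u) ≤ log 2 ^ 2 := by
  have hmono : MonotoneOn (fun u ↦ log u * log (1 - u)) (Icc u (1 / 2)) := by
    refine monotoneOn_of_hasDerivWithinAt_nonneg (f' := fun t ↦ log (1 - t) / t - log t / (1 - t))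
      (convex_Icc _ _) ?_ (fun t ht ↦ ?_) fun t ht ↦ ?_
    · intro t ht
      have ht0 : t ≠ 0 := (h0.trans_le ht.1).ne'
      have ht1 : 1 - t ≠ 0 := by linarith [ht.2]
      exact ((continuousAt_log ht0).mul ((continuousAt_log ht1).comp
        (continuousAt_const.sub continuousAt_id))).continuousWithinAt
    all_goals
      rw [interior_Icc] at ht
      have ht0 : 0 < t := h0.trans ht.1
      have ht1 : 0 < 1 - t := by linarith [ht.2]
    · exact (hasDerivAt_log_mul_log_one_sub ht0.ne' (by linarith)).hasDerivWithinAt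
    · rw [sub_nonneg, div_le_div_iff₀ ht1 ht0]
      linarith [mul_log_lt_one_sub_mul_log_one_sub ht0 ht.2]
  calc log u * log (1 - u) ≤ log (1 / 2) * log (1 - 1 / 2) := hmono ⟨le_rfl, h1⟩ ⟨h1, le_rfl⟩ h1
    _ = log 2 ^ 2 := by rw [sub_half, one_div, log_inv]; ring

theorem Real.log_mul_log_one_sub_le {u : ℝ} (h0 : 0 < u) (h1 : u < 1) :
    log u * log (1 - u) ≤ log 2 ^ 2 := by
  rcases le_total u (1 / 2) with hu | hu
  · exact log_mul_log_one_sub_le_of_le_half h0 hu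
  · simpa [mul_comm] using
      log_mul_log_one_sub_le_of_le_half (u := 1 - u) (by linarith) (by linarith)

/-- The function `f(x) = x·ln(1 − e^{−x})` on `(0,∞)` attains its
infimum at `x = ln 2`, and the infimum equals `−(ln 2)²`. -/
theorem stmt16 :
    IsLeast {y : ℝ | ∃ x : ℝ, 0 < x ∧ y = x * Real.log (1 - Real.exp (-x))}
      (-(Real.log 2) ^ 2) ∧
    Real.log 2 * Real.log (1 - Real.exp (-Real.log 2)) = -(Real.log 2) ^ 2 := by
  have hmin : log 2 * log (1 - exp (-log 2)) = -log 2 ^ 2 := by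
    rw [exp_neg, exp_log two_pos, ← one_div, sub_half, one_div, log_inv]
    ring
  refine ⟨⟨⟨log 2, log_pos one_lt_two, hmin.symm⟩, ?_⟩, hmin⟩
  rintro _ ⟨x, hx, rfl⟩
  have hbound := log_mul_log_one_sub_le (exp_pos (-x)) (exp_lt_one_iff.2 (neg_neg_of_pos hx))
  rw [log_exp] at hbound
  linarith
end

section
/- Suppose n nodes each independently and uniformly choose one transmission time in each of K = c·ln2·ln n disjoint intervals of length n/ln2 (assume n/ln2 is an integer), where c > 1/ln²2 is a constant, and say a fixed node v fails in an interval if some other node chooses the same time as v in that interval. Then, since each of the n−1 other nodes independently and uniformly picks a slot among ⌈n/ln2⌉ slots, the probability that none picks v's slot is (1 − 1/⌈n/ln2⌉)^{n−1} = 1/2 − o(1), and hence the probability that v fails in all K independent intervals is at most (1/2 + o(1))^{c·ln2·ln n} = n^{−c·ln²2 + o(1)} = o(1/n). -/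
open Filter Real

private lemma stmt18_aux_s (n : ℕ) : (n : ℝ) ≤ (⌈(n : ℝ) / Real.log 2⌉₊ : ℝ) := by
  have h2 : (0:ℝ) < Real.log 2 := Real.log_pos one_lt_two
  have hle : Real.log 2 ≤ 1 := by
    have := Real.log_le_sub_one_of_pos (by norm_num : (0:ℝ) < 2); linarith
  have h1 : (n : ℝ) ≤ (n : ℝ) / Real.log 2 := by
    rw [le_div_iff₀ h2]
    nlinarith [Nat.cast_nonneg (α := ℝ) n]
  exact h1.trans (Nat.le_ceil _)

private lemma stmt18_part1 :
    Filter.Tendsto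
      (fun n : ℕ => (1 - 1 / (⌈(n : ℝ) / Real.log 2⌉₊ : ℝ)) ^ (n - 1))
      Filter.atTop (nhds (1 / 2)) := by
  set A := Real.log 2 with hA
  have hA0 : (0:ℝ) < A := Real.log_pos one_lt_two
  set s : ℕ → ℝ := fun n => (⌈(n : ℝ) / A⌉₊ : ℝ) with hs
  have hsn : ∀ n : ℕ, (n : ℝ) ≤ s n := stmt18_aux_s
  have hS : Tendsto s atTop atTop :=
    tendsto_atTop_mono hsn tendsto_natCast_atTop_atTop
  -- ratio (n-1)/s n → A
  have hone : Tendsto (fun n : ℕ => 1 / (n : ℝ)) atTop (nhds 0) :=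
    tendsto_one_div_atTop_nhds_zero_nat
  have hup : Tendsto (fun n : ℕ => A - A * (1 / (n:ℝ))) atTop (nhds A) := by
    simpa using tendsto_const_nhds.sub (hone.const_mul A)
  have hlo : Tendsto (fun n : ℕ => (1 - 1/(n:ℝ)) / (1/A + 1/(n:ℝ))) atTop (nhds A) := by
    have hnum : Tendsto (fun n : ℕ => 1 - 1/(n:ℝ)) atTop (nhds 1) := by
      simpa using tendsto_const_nhds.sub hone
    have hden : Tendsto (fun n : ℕ => 1/A + 1/(n:ℝ)) atTop (nhds (1/A)) := by
      simpa using tendsto_const_nhds.add hone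
    have := hnum.div hden (by positivity)
    rw [one_div_one_div] at this
    exact this
  have hr : Tendsto (fun n : ℕ => ((n:ℝ) - 1) / s n) atTop (nhds A) := by
    apply tendsto_of_tendsto_of_tendsto_of_le_of_le' hlo hup
    · filter_upwards [eventually_ge_atTop 1] with n hn
      have hn1 : (1:ℝ) ≤ (n:ℝ) := by exact_mod_cast hn
      have hceil : s n < (n:ℝ)/A + 1 := Nat.ceil_lt_add_one (by positivity)
      have hspos : (0:ℝ) < s n := lt_of_lt_of_le (by linarith) (hsn n)
      have h1 : ((n:ℝ) - 1) / ((n:ℝ)/A + 1) ≤ ((n:ℝ) - 1) / s n :=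
        div_le_div_of_nonneg_left (by linarith) hspos (le_of_lt hceil)
      have h2 : (1 - 1/(n:ℝ)) / (1/A + 1/(n:ℝ)) = ((n:ℝ) - 1) / ((n:ℝ)/A + 1) := by
        have hn0 : (n:ℝ) ≠ 0 := by positivity
        field_simp
      rw [h2]; exact h1
    · filter_upwards [eventually_ge_atTop 1] with n hn
      have hn1 : (1:ℝ) ≤ (n:ℝ) := by exact_mod_cast hn
      have hdiv : (n:ℝ)/A ≤ s n := Nat.le_ceil _
      have hspos : (0:ℝ) < s n := lt_of_lt_of_le (by linarith) (hsn n)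
      have hApos : (0:ℝ) < (n:ℝ)/A := by positivity
      have h1 : ((n:ℝ) - 1) / s n ≤ ((n:ℝ) - 1) / ((n:ℝ)/A) :=
        div_le_div_of_nonneg_left (by linarith) hApos hdiv
      have h2 : ((n:ℝ) - 1) / ((n:ℝ)/A) = A - A * (1/(n:ℝ)) := by
        have hn0 : (n:ℝ) ≠ 0 := by positivity
        field_simp
      rw [← h2]; exact h1
  -- s n * log (1 - 1/s n) → -1
  have hlog : Tendsto (fun n : ℕ => s n * Real.log (1 - 1 / s n)) atTop (nhds (-1)) := by
    have := (Real.tendsto_mul_log_one_add_div_atTop (-1)).comp hS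
    simp only [neg_div, ← sub_eq_add_neg] at this
    exact this
  have hmul : Tendsto (fun n : ℕ => ((n:ℝ) - 1) / s n * (s n * Real.log (1 - 1 / s n)))
      atTop (nhds (A * (-1))) := hr.mul hlog
  have hexp : Tendsto (fun n : ℕ =>
      Real.exp (((n:ℝ) - 1) / s n * (s n * Real.log (1 - 1 / s n))))
      atTop (nhds (1/2)) := by
    have := (Real.continuous_exp.tendsto (A * (-1))).comp hmul
    have he : Real.exp (A * (-1)) = 1/2 := by
      rw [mul_neg_one, Real.exp_neg, hA, Real.exp_log (by norm_num : (0:ℝ) < 2)]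
      norm_num
    rw [he] at this
    exact this
  apply hexp.congr'
  filter_upwards [eventually_ge_atTop 2] with n hn
  have hn2 : (2:ℝ) ≤ (n:ℝ) := by exact_mod_cast hn
  have hs2 : (2:ℝ) ≤ s n := le_trans hn2 (hsn n)
  have hspos : (0:ℝ) < s n := by linarith
  have hsne : s n ≠ 0 := ne_of_gt hspos
  have hapos : (0:ℝ) < 1 - 1 / s n := by
    have : 1 / s n < 1 := by rw [div_lt_one hspos]; linarith
    linarith
  have hcast : ((n - 1 : ℕ) : ℝ) = (n:ℝ) - 1 := by
    have : 1 ≤ n := le_trans (by norm_num) hn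
    push_cast [Nat.cast_sub this]
    ring
  rw [← Real.exp_log (pow_pos hapos (n-1)), Real.log_pow, hcast]
  congr 1
  field_simp

/-- Each of `n` nodes uniformly picks a slot among
`s = ⌈n/ln 2⌉` slots in each of `K = ⌊c·ln 2·ln n⌋` independent intervals.
Key estimates: the per-interval success probability
`(1 − 1/⌈n/ln 2⌉)^{n−1} → 1/2`, and for `c > 1/ln²2`, the union bound
`n·(1 − (1 − 1/⌈n/ln 2⌉)^{n−1})^{⌊c·ln 2·ln n⌋} → 0`. -/
theorem stmt18 (c : ℝ) (hc : 1 / (Real.log 2) ^ 2 < c) :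
    Filter.Tendsto
      (fun n : ℕ => (1 - 1 / (⌈(n : ℝ) / Real.log 2⌉₊ : ℝ)) ^ (n - 1))
      Filter.atTop (nhds (1 / 2)) ∧
    Filter.Tendsto
      (fun n : ℕ => (n : ℝ) *
        (1 - (1 - 1 / (⌈(n : ℝ) / Real.log 2⌉₊ : ℝ)) ^ (n - 1)) ^
          ⌊c * Real.log 2 * Real.log n⌋₊)
      Filter.atTop (nhds 0) := by
  refine ⟨stmt18_part1, ?_⟩
  set A := Real.log 2 with hA
  have hA0 : (0:ℝ) < A := Real.log_pos one_lt_two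
  have hc0 : 0 < c := lt_trans (by positivity) hc
  have hcA2 : 1 < c * A ^ 2 := by
    rw [div_lt_iff₀ (by positivity)] at hc
    linarith [hc]
  set L : ℝ := -(A + 1/(c*A))/2 with hLdef
  have hcAne : c * A ≠ 0 := by positivity
  have hcAL : c * A * L = -(c * A^2 + 1)/2 := by
    rw [hLdef]; field_simp
  have hL0 : L < 0 := by
    rw [hLdef]
    have : 0 < 1/(c*A) := by positivity
    nlinarith
  have hcoef : 1 + c * A * L < 0 := by
    rw [hcAL]; linarith
  set d : ℝ := Real.exp L with hd
  have hd0 : 0 < d := Real.exp_pos L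
  have h_half_lt_d : 1/2 < d := by
    have hinv : 1/(c*A) < A := by
      rw [div_lt_iff₀ (by positivity)]
      nlinarith
    have hnegA : -A < L := by rw [hLdef]; linarith
    have : Real.exp (-A) < d := Real.exp_lt_exp.mpr hnegA
    rwa [Real.exp_neg, hA, Real.exp_log (by norm_num : (0:ℝ) < 2), ← one_div] at this
  -- b n → 1/2
  have hb : Tendsto (fun n : ℕ =>
      1 - (1 - 1 / (⌈(n : ℝ) / A⌉₊ : ℝ)) ^ (n - 1)) atTop (nhds (1/2)) := by
    have h2 : Tendsto (fun n : ℕ =>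
        1 - (1 - 1 / (⌈(n : ℝ) / Real.log 2⌉₊ : ℝ)) ^ (n - 1)) atTop (nhds (1 - 1/2)) :=
      tendsto_const_nhds.sub stmt18_part1
    norm_num at h2 ⊢
    exact h2
  have hbd : ∀ᶠ n : ℕ in atTop,
      1 - (1 - 1 / (⌈(n : ℝ) / A⌉₊ : ℝ)) ^ (n - 1) < d :=
    hb.eventually_lt_const h_half_lt_d
  -- nonneg of b
  have hb01 : ∀ n : ℕ, 1 ≤ n →
      0 ≤ 1 - (1 - 1 / (⌈(n : ℝ) / A⌉₊ : ℝ)) ^ (n - 1) ∧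
      0 ≤ 1 - 1 / (⌈(n : ℝ) / A⌉₊ : ℝ) := by
    intro n hn
    have hn1 : (1:ℝ) ≤ (n:ℝ) := by exact_mod_cast hn
    have hs1 : (1:ℝ) ≤ (⌈(n : ℝ) / A⌉₊ : ℝ) := le_trans hn1 (stmt18_aux_s n)
    have ha0 : 0 ≤ 1 - 1 / (⌈(n : ℝ) / A⌉₊ : ℝ) := by
      have : 1 / (⌈(n : ℝ) / A⌉₊ : ℝ) ≤ 1 := by
        rw [div_le_one (by linarith)]; linarith
      linarith
    have ha1 : 1 - 1 / (⌈(n : ℝ) / A⌉₊ : ℝ) ≤ 1 := by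
      have : 0 ≤ 1 / (⌈(n : ℝ) / A⌉₊ : ℝ) := by positivity
      linarith
    exact ⟨by
      have := pow_le_one₀ ha0 ha1 (n := n - 1)
      linarith, ha0⟩
  -- the dominating function
  have hdom : Tendsto (fun n : ℕ => Real.exp ((1 + c*A*L) * Real.log n - L))
      atTop (nhds 0) := by
    apply Real.tendsto_exp_atBot.comp
    have hlogn : Tendsto (fun n : ℕ => Real.log n) atTop atTop :=
      Real.tendsto_log_atTop.comp tendsto_natCast_atTop_atTop
    have h1 : Tendsto (fun n : ℕ => (1 + c*A*L) * Real.log n) atTop atBot :=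
      hlogn.const_mul_atTop_of_neg hcoef
    exact tendsto_atBot_add_const_right _ (-L) h1 |>.congr (fun n => by ring)
  apply squeeze_zero' (g := fun n : ℕ => Real.exp ((1 + c*A*L) * Real.log n - L))
  · filter_upwards [eventually_ge_atTop 1] with n hn
    have := (hb01 n hn).1
    positivity
  · filter_upwards [eventually_ge_atTop 1, hbd] with n hn hbdn
    have hn1 : (1:ℝ) ≤ (n:ℝ) := by exact_mod_cast hn
    have hb0 := (hb01 n hn).1
    set K := ⌊c * A * Real.log n⌋₊ with hK
    set b := 1 - (1 - 1 / (⌈(n : ℝ) / A⌉₊ : ℝ)) ^ (n - 1) with hbdef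
    have step1 : (n:ℝ) * b ^ K ≤ (n:ℝ) * d ^ K := by
      apply mul_le_mul_of_nonneg_left _ (by linarith)
      exact pow_le_pow_left₀ hb0 (le_of_lt hbdn) K
    have step2 : (n:ℝ) * d ^ K = Real.exp (Real.log n + (K:ℝ) * L) := by
      rw [hd, ← Real.exp_nat_mul, Real.exp_add, Real.exp_log (by linarith : (0:ℝ) < (n:ℝ))]
    have step3 : Real.log n + (K:ℝ) * L ≤ (1 + c*A*L) * Real.log n - L := by
      have hfl : c * A * Real.log n - 1 < (K:ℝ) := by
        rw [hK]; exact Nat.sub_one_lt_floor _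
      have : (K:ℝ) * L ≤ (c * A * Real.log n - 1) * L :=
        mul_le_mul_of_nonpos_right (le_of_lt hfl) (le_of_lt hL0)
      nlinarith [this]
    calc (n:ℝ) * b ^ K ≤ (n:ℝ) * d ^ K := step1
      _ = Real.exp (Real.log n + (K:ℝ) * L) := step2
      _ ≤ Real.exp ((1 + c*A*L) * Real.log n - L) := Real.exp_le_exp.mpr step3
  · exact hdom
end
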